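/- Relative Mayer–Vietoris: let (H, A) and (H', A') be hypergraph pairs such that for all σ ∈ H, σ' ∈ H', either σ ∩ σ' = ∅ or σ ∩ σ' ∈ H ∩ H', and for all τ ∈ A, τ' ∈ A', either τ ∩ τ' = ∅ or τ ∩ τ' ∈ A ∩ A'. Then there is a long exact sequence ⋯ → H_n(H ∩ H', A ∩ A') → H_n(H, A) ⊕ H_n(H', A') → H_n(H ∪ H', A ∪ A') → H_{n-1}(H ∩ H', A ∩ A') → ⋯ of relative embedded homology. -/

import Mathlib

/-!
The long exact sequence is that of a Mayer–Vietoris situation of subcomplex pairs: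
if `(K, L)` and `(K', L')` are pairs of subcomplexes of a chain complex, then
`(K ⊓ K', L ⊓ L') → (K, L) ⊕ (K', L') → (K ⊔ K', L ⊔ L')` gives a long exact sequence of relative
homology by the usual diagram chase. The connecting map sends a relative cycle `z = x + y` with
`∂z = u + v` (`x ∈ K`, `y ∈ K'`, `u ∈ L`, `v ∈ L'`) to the class of `∂x - u`.

For hypergraphs, the infimum complex of `H ∩ H'` is always the intersection of those of `H` and `H'`.
The intersection condition makes the infimum complex of `H ∪ H'` their sum: split a chain `c` of
`Inf(H ∪ H')` into its part `a` on `H` and `b` on `H' \ H`. If a face `τ ∉ H` of some `σ ∈ H`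
occurred in `∂a`, then `τ ∉ H'` as well, so `∂c` vanishes at `τ` and `τ` must also occur in `∂b`,
as a face of some `σ' ∈ H' \ H`. But then `σ ∩ σ'` is a nonempty member of `H ∩ H'` squeezed
between `τ` and `σ ≠ σ'`, so it equals `τ`, contradicting `τ ∉ H`. The same cancellation then
puts `∂b` on `H'`.
-/

/-- Oriented `n`-simplices on a vertex set `V`: finsets of cardinality `n+1`. -/
abbrev Simp (V : Type) (n : ℕ) : Type := {σ : Finset V // σ.card = n + 1}

/-- The group of `n`-chains with coefficients in `G` on the full simplex on `V`. -/
abbrev Ch (V : Type) (G : Type) [AddCommGroup G] (n : ℕ) : Type := Simp V n →₀ G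

/-- Boundary of a single `(n+1)`-simplex with coefficient `g`. -/
noncomputable def bdryFun (V : Type) [LinearOrder V] (G : Type) [AddCommGroup G]
    (n : ℕ) (σ : Simp V (n + 1)) (g : G) : Ch V G n :=
  ∑ v ∈ σ.1.attach, Finsupp.single
    ⟨σ.1.erase v.1, by rw [Finset.card_erase_of_mem v.2, σ.2]; omega⟩
    (((-1 : ℤ) ^ ((σ.1.filter fun w => w < v.1).card)) • g)

/-- The simplicial boundary homomorphism `C_{n+1} → C_n`. -/
noncomputable def bdry (V : Type) [LinearOrder V] (G : Type) [AddCommGroup G]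
    (n : ℕ) : Ch V G (n + 1) →+ Ch V G n :=
  Finsupp.liftAddHom fun σ =>
    { toFun := bdryFun V G n σ
      map_zero' := by simp [bdryFun]
      map_add' := fun a b => by
        simp [bdryFun, smul_add, Finsupp.single_add, Finset.sum_add_distrib] }

/-- The subgroup `G(K)_n ⊆ C_n` of chains supported on the `n`-hyperedges of `K`. -/
def chainsOn (V : Type) [LinearOrder V] (G : Type) [AddCommGroup G]
    (K : Set (Finset V)) (n : ℕ) : AddSubgroup (Ch V G n) where
  carrier := {c | ∀ σ ∈ c.support, (σ : Simp V n).1 ∈ K}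
  zero_mem' := by simp
  add_mem' := by
    intro a b ha hb σ hσ
    rcases Finset.mem_union.mp (Finsupp.support_add hσ) with h | h
    exacts [ha σ h, hb σ h]
  neg_mem' := by
    intro a ha σ hσ
    exact ha σ (by simpa using hσ)

section Generic

variable {C : ℕ → Type} [∀ n, AddCommGroup (C n)]

/-- The infimum chain complex of a graded subgroup `D` inside `(C, d)`. -/
def InfC (d : ∀ n, C (n + 1) →+ C n) (D : ∀ n, AddSubgroup (C n)) :
    ∀ n, AddSubgroup (C n)
  | 0 => D 0
  | (n + 1) => D (n + 1) ⊓ (D n).comap (d n)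

/-- The supremum chain complex of a graded subgroup `D` inside `(C, d)`. -/
def SupC (d : ∀ n, C (n + 1) →+ C n) (D : ∀ n, AddSubgroup (C n)) (n : ℕ) :
    AddSubgroup (C n) :=
  D n ⊔ (D (n + 1)).map (d n)

/-- Relative cycles of the pair of graded subgroups `(K, L)`. -/
def relZ (d : ∀ n, C (n + 1) →+ C n) (K L : ∀ n, AddSubgroup (C n)) :
    ∀ n, AddSubgroup (C n)
  | 0 => K 0
  | (n + 1) => K (n + 1) ⊓ (L n).comap (d n)

/-- Relative boundaries of the pair of graded subgroups `(K, L)`. -/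
def relB (d : ∀ n, C (n + 1) →+ C n) (K L : ∀ n, AddSubgroup (C n)) (n : ℕ) :
    AddSubgroup (C n) :=
  ((K (n + 1)).map (d n) ⊔ L n) ⊓ relZ d K L n

/-- Relative homology of the pair `(K, L)`, i.e. the homology of the quotient chain
complex `K/L`.  (Taking `L = ⊥` gives the absolute homology of `K`.) -/
abbrev relH (d : ∀ n, C (n + 1) →+ C n) (K L : ∀ n, AddSubgroup (C n)) (n : ℕ) : Type _ :=
  relZ d K L n ⧸ (relB d K L n).addSubgroupOf (relZ d K L n)

theorem relZ_mono (d : ∀ n, C (n + 1) →+ C n) {K L K' L' : ∀ n, AddSubgroup (C n)}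
    (hK : ∀ n, K n ≤ K' n) (hL : ∀ n, L n ≤ L' n) :
    ∀ n, relZ d K L n ≤ relZ d K' L' n
  | 0 => hK 0
  | (n + 1) => inf_le_inf (hK (n + 1)) (AddSubgroup.comap_mono (hL n))

theorem relB_mono (d : ∀ n, C (n + 1) →+ C n) {K L K' L' : ∀ n, AddSubgroup (C n)}
    (hK : ∀ n, K n ≤ K' n) (hL : ∀ n, L n ≤ L' n) (n : ℕ) :
    relB d K L n ≤ relB d K' L' n :=
  inf_le_inf (sup_le_sup (AddSubgroup.map_mono (hK (n + 1))) (hL n))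
    (relZ_mono d hK hL n)

/-- The map on relative homology induced by an inclusion of pairs. -/
noncomputable def inducedRelMap (d : ∀ n, C (n + 1) →+ C n)
    {K L K' L' : ∀ n, AddSubgroup (C n)}
    (hK : ∀ n, K n ≤ K' n) (hL : ∀ n, L n ≤ L' n) (n : ℕ) :
    relH d K L n →+ relH d K' L' n :=
  QuotientAddGroup.map _ _ (AddSubgroup.inclusion (relZ_mono d hK hL n)) (by
    intro x hx
    simp only [AddSubgroup.mem_comap, AddSubgroup.mem_addSubgroupOf,
      AddSubgroup.coe_inclusion] at hx ⊢
    exact relB_mono d hK hL n hx)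

theorem InfC_le_SupC (d : ∀ n, C (n + 1) →+ C n) (D : ∀ n, AddSubgroup (C n)) :
    ∀ n, InfC d D n ≤ SupC d D n := by
  intro n
  cases n with
  | zero => exact le_sup_left
  | succ n => exact le_trans inf_le_left le_sup_left

theorem InfC_mono (d : ∀ n, C (n + 1) →+ C n) {D D' : ∀ n, AddSubgroup (C n)}
    (h : ∀ n, D n ≤ D' n) : ∀ n, InfC d D n ≤ InfC d D' n
  | 0 => h 0
  | (n + 1) => inf_le_inf (h (n + 1)) (AddSubgroup.comap_mono (h n))

end Generic

theorem chainsOn_mono (V : Type) [LinearOrder V] (G : Type) [AddCommGroup G]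
    {K K' : Set (Finset V)} (h : K ⊆ K') (n : ℕ) :
    chainsOn V G K n ≤ chainsOn V G K' n := by
  intro c hc σ hσ
  exact h (hc σ hσ)

/-- The map on relative embedded homology induced by an inclusion of hypergraph pairs
`(K, L) ⊆ (K', L')`. -/
noncomputable def pairMap (V : Type) [LinearOrder V] (G : Type) [AddCommGroup G]
    {K L K' L' : Set (Finset V)} (hK : K ⊆ K') (hL : L ⊆ L') (n : ℕ) :
    relH (bdry V G) (InfC (bdry V G) fun m => chainsOn V G K m)
        (InfC (bdry V G) fun m => chainsOn V G L m) n →+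
      relH (bdry V G) (InfC (bdry V G) fun m => chainsOn V G K' m)
        (InfC (bdry V G) fun m => chainsOn V G L' m) n :=
  inducedRelMap (bdry V G) (InfC_mono (bdry V G) fun m => chainsOn_mono V G hK m)
    (InfC_mono (bdry V G) fun m => chainsOn_mono V G hL m) n

/-- The first Mayer–Vietoris map
`H_n(H ∩ H', A ∩ A') → H_n(H, A) ⊕ H_n(H', A')`, induced by the two inclusions. -/
noncomputable def mvFst (V : Type) [LinearOrder V] (G : Type) [AddCommGroup G]
    (H H' A A' : Set (Finset V)) (n : ℕ) :
    relH (bdry V G) (InfC (bdry V G) fun m => chainsOn V G (H ∩ H') m)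
        (InfC (bdry V G) fun m => chainsOn V G (A ∩ A') m) n →+
      (relH (bdry V G) (InfC (bdry V G) fun m => chainsOn V G H m)
          (InfC (bdry V G) fun m => chainsOn V G A m) n) ×
        (relH (bdry V G) (InfC (bdry V G) fun m => chainsOn V G H' m)
          (InfC (bdry V G) fun m => chainsOn V G A' m) n) :=
  (pairMap V G Set.inter_subset_left Set.inter_subset_left n).prod
    (pairMap V G Set.inter_subset_right Set.inter_subset_right n)

/-- The second Mayer–Vietoris map
`H_n(H, A) ⊕ H_n(H', A') → H_n(H ∪ H', A ∪ A')`, the difference of the two maps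
induced by the inclusions. -/
noncomputable def mvSnd (V : Type) [LinearOrder V] (G : Type) [AddCommGroup G]
    (H H' A A' : Set (Finset V)) (n : ℕ) :
    ((relH (bdry V G) (InfC (bdry V G) fun m => chainsOn V G H m)
          (InfC (bdry V G) fun m => chainsOn V G A m) n) ×
        (relH (bdry V G) (InfC (bdry V G) fun m => chainsOn V G H' m)
          (InfC (bdry V G) fun m => chainsOn V G A' m) n)) →+
      relH (bdry V G) (InfC (bdry V G) fun m => chainsOn V G (H ∪ H') m)
        (InfC (bdry V G) fun m => chainsOn V G (A ∪ A') m) n :=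
  (pairMap V G Set.subset_union_left Set.subset_union_left n).comp
      (AddMonoidHom.fst _ _) -
    (pairMap V G Set.subset_union_right Set.subset_union_right n).comp
      (AddMonoidHom.snd _ _)

section Boundary

variable {V : Type} [LinearOrder V] {G : Type} [AddCommGroup G]

def faceSign (s : Finset V) (v : V) : ℤ := (-1) ^ (s.filter (· < v)).card

theorem faceSign_erase_mul_faceSign {s : Finset V} {v w : V} (hw : w ∈ s) (hwv : w < v) :
    faceSign (s.erase v) w * faceSign s v = -(faceSign (s.erase w) v * faceSign s w) := by
  have h₁ : (s.erase v).filter (· < w) = s.filter (· < w) := by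
    rw [Finset.filter_erase, Finset.erase_eq_of_notMem]
    simp only [Finset.mem_filter, not_and, not_lt]
    exact fun _ => hwv.le
  have hw' : w ∈ s.filter (· < v) := Finset.mem_filter.mpr ⟨hw, hwv⟩
  have h₂ : ((s.erase w).filter (· < v)).card + 1 = (s.filter (· < v)).card := by
    rw [Finset.filter_erase, Finset.card_erase_add_one hw']
  simp only [faceSign, h₁, ← h₂, pow_succ]
  ring

theorem faceSign_swap {s : Finset V} {v w : V} (hv : v ∈ s) (hw : w ∈ s) (hvw : v ≠ w) :
    faceSign (s.erase v) w * faceSign s v + faceSign (s.erase w) v * faceSign s w = 0 := by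
  rcases hvw.lt_or_gt with h | h
  · rw [faceSign_erase_mul_faceSign hv h]; ring
  · rw [faceSign_erase_mul_faceSign hw h]; ring

theorem sum_faces_faces_eq_zero (s : Finset V) (g : G) :
    ∑ v ∈ s, ∑ w ∈ s.erase v,
      Finsupp.single ((s.erase v).erase w) ((faceSign (s.erase v) w * faceSign s v) • g) =
      0 := by
  rw [Finset.sum_sigma']
  refine Finset.sum_involution (fun p _ => ⟨p.2, p.1⟩) ?_ ?_ ?_ (fun _ _ => rfl)
  · rintro ⟨v, w⟩ hp
    obtain ⟨hv, hwv⟩ := Finset.mem_sigma.mp hp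
    rw [Finset.erase_right_comm, ← Finsupp.single_add, ← add_smul,
      faceSign_swap hv (Finset.mem_of_mem_erase hwv) (Finset.ne_of_mem_erase hwv).symm,
      zero_smul, Finsupp.single_zero]
  · rintro ⟨v, w⟩ hp - h
    exact Finset.ne_of_mem_erase (Finset.mem_sigma.mp hp).2 (congrArg Sigma.fst h)
  · rintro ⟨v, w⟩ hp
    obtain ⟨hv, hwv⟩ := Finset.mem_sigma.mp hp
    exact Finset.mem_sigma.mpr ⟨Finset.mem_of_mem_erase hwv,
      Finset.mem_erase.mpr ⟨(Finset.ne_of_mem_erase hwv).symm, hv⟩⟩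

theorem bdry_single (n : ℕ) (σ : Simp V (n + 1)) (g : G) :
    bdry V G n (Finsupp.single σ g) = bdryFun V G n σ g :=
  Finsupp.liftAddHom_apply_single _ _ _

theorem mapDomain_bdryFun (n : ℕ) (σ : Simp V (n + 1)) (g : G) :
    Finsupp.mapDomain Subtype.val (bdryFun V G n σ g) =
      ∑ v ∈ σ.1, Finsupp.single (σ.1.erase v) (faceSign σ.1 v • g) := by
  simp only [bdryFun, Finsupp.mapDomain_finsetSum, Finsupp.mapDomain_single]
  exact Finset.sum_attach σ.1 fun v => Finsupp.single (σ.1.erase v) (faceSign σ.1 v • g)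

theorem bdry_bdry (n : ℕ) (c : Ch V G (n + 2)) : bdry V G n (bdry V G (n + 1) c) = 0 := by
  suffices h : (bdry V G n).comp (bdry V G (n + 1)) = 0 from DFunLike.congr_fun h c
  -- Forgetting the cardinality proofs turns `∂∂` into a plain double sum over pairs of removed
  -- vertices, whose terms cancel in pairs.
  refine Finsupp.addHom_ext fun τ g => Finsupp.mapDomain_injective Subtype.val_injective ?_
  rw [AddMonoidHom.comp_apply, AddMonoidHom.zero_apply, Finsupp.mapDomain_zero, bdry_single,
    bdryFun, map_sum, Finsupp.mapDomain_finsetSum]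
  simp only [bdry_single, mapDomain_bdryFun, smul_smul]
  exact (Finset.sum_attach τ.1 _).trans (sum_faces_faces_eq_zero τ.1 g)

end Boundary

section RelativeHomology

variable {C : ℕ → Type} [∀ n, AddCommGroup (C n)] {d : ∀ n, C (n + 1) →+ C n}
  {K L K' L' KI LI KU LU : ∀ n, AddSubgroup (C n)}

def boundariesModulo (d : ∀ n, C (n + 1) →+ C n) (K L : ∀ n, AddSubgroup (C n)) (n : ℕ) :
    AddSubgroup (C n) :=
  (K (n + 1)).map (d n) ⊔ L n

def IsSubcomplex (d : ∀ n, C (n + 1) →+ C n) (D : ∀ n, AddSubgroup (C n)) : Prop :=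
  ∀ n, ∀ x ∈ D (n + 1), d n x ∈ D n

structure IsSubcomplexPair (d : ∀ n, C (n + 1) →+ C n) (K L : ∀ n, AddSubgroup (C n)) :
    Prop where
  le : ∀ n, L n ≤ K n
  isSubcomplex_left : IsSubcomplex d K
  isSubcomplex_right : IsSubcomplex d L

theorem mem_boundariesModulo {n : ℕ} {x : C n} :
    x ∈ boundariesModulo d K L n ↔ ∃ ξ ∈ K (n + 1), ∃ l ∈ L n, d n ξ + l = x := by
  simp only [boundariesModulo, AddSubgroup.mem_sup, AddSubgroup.mem_map, exists_exists_and_eq_and]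

theorem d_add_mem_boundariesModulo {n : ℕ} {ξ : C (n + 1)} {l : C n} (hξ : ξ ∈ K (n + 1))
    (hl : l ∈ L n) : d n ξ + l ∈ boundariesModulo d K L n :=
  mem_boundariesModulo.mpr ⟨ξ, hξ, l, hl, rfl⟩

theorem mem_relZ_succ {n : ℕ} {x : C (n + 1)} :
    x ∈ relZ d K L (n + 1) ↔ x ∈ K (n + 1) ∧ d n x ∈ L n :=
  Iff.rfl

theorem boundariesModulo_le_relZ (hdd : ∀ n (x : C (n + 2)), d n (d (n + 1) x) = 0)
    (hp : IsSubcomplexPair d K L) {n : ℕ} : boundariesModulo d K L n ≤ relZ d K L n := by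
  intro x hx
  obtain ⟨ξ, hξ, l, hl, rfl⟩ := mem_boundariesModulo.mp hx
  have hK : d n ξ + l ∈ K n := add_mem (hp.isSubcomplex_left n ξ hξ) (hp.le n hl)
  cases n with
  | zero => exact hK
  | succ n =>
    refine mem_relZ_succ.mpr ⟨hK, ?_⟩
    rw [map_add, hdd, zero_add]
    exact hp.isSubcomplex_right n l hl

theorem relZ_inf (hK : ∀ n, KI n = K n ⊓ K' n) (hL : ∀ n, LI n = L n ⊓ L' n) {n : ℕ} :
    relZ d KI LI n = relZ d K L n ⊓ relZ d K' L' n := by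
  cases n with
  | zero => exact hK 0
  | succ n =>
    simp only [relZ, hK, hL, AddSubgroup.comap_inf]
    exact inf_inf_inf_comm _ _ _ _

theorem boundariesModulo_sup (hK : ∀ n, KU n = K n ⊔ K' n) (hL : ∀ n, LU n = L n ⊔ L' n)
    {n : ℕ} :
    boundariesModulo d KU LU n = boundariesModulo d K L n ⊔ boundariesModulo d K' L' n := by
  simp only [boundariesModulo, hK, hL, AddSubgroup.map_sup]
  exact sup_sup_sup_comm _ _ _ _

theorem relH_mk_eq_zero_iff {n : ℕ} {x : C n} (hx : x ∈ relZ d K L n) :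
    (QuotientAddGroup.mk ⟨x, hx⟩ : relH d K L n) = 0 ↔ x ∈ boundariesModulo d K L n := by
  rw [QuotientAddGroup.eq_zero_iff, AddSubgroup.mem_addSubgroupOf, relB, AddSubgroup.mem_inf]
  exact and_iff_left hx

theorem relH_mk_eq_mk_iff {n : ℕ} {x y : C n} (hx : x ∈ relZ d K L n) (hy : y ∈ relZ d K L n) :
    (QuotientAddGroup.mk ⟨x, hx⟩ : relH d K L n) = QuotientAddGroup.mk ⟨y, hy⟩ ↔
      x - y ∈ boundariesModulo d K L n := by
  rw [← sub_eq_zero, ← QuotientAddGroup.mk_sub]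
  exact relH_mk_eq_zero_iff (sub_mem hx hy)

theorem isSubcomplex_InfC (hdd : ∀ n (x : C (n + 2)), d n (d (n + 1) x) = 0)
    (D : ∀ n, AddSubgroup (C n)) : IsSubcomplex d (InfC d D)
  | 0, _, hx => (AddSubgroup.mem_inf.mp hx).2
  | n + 1, x, hx => AddSubgroup.mem_inf.mpr
      ⟨(AddSubgroup.mem_inf.mp hx).2, AddSubgroup.mem_comap.mpr (by rw [hdd]; exact zero_mem _)⟩

theorem isSubcomplexPair_InfC (hdd : ∀ n (x : C (n + 2)), d n (d (n + 1) x) = 0)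
    {D E : ∀ n, AddSubgroup (C n)} (hED : ∀ n, E n ≤ D n) :
    IsSubcomplexPair d (InfC d D) (InfC d E) :=
  ⟨InfC_mono d hED, isSubcomplex_InfC hdd D, isSubcomplex_InfC hdd E⟩

theorem InfC_inf (D D' : ∀ n, AddSubgroup (C n)) :
    ∀ n, InfC d (fun n => D n ⊓ D' n) n = InfC d D n ⊓ InfC d D' n
  | 0 => rfl
  | n + 1 => by
    simp only [InfC, AddSubgroup.comap_inf]
    exact inf_inf_inf_comm _ _ _ _

structure MayerVietorisData (d : ∀ n, C (n + 1) →+ C n)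
    (K L K' L' KI LI KU LU : ∀ n, AddSubgroup (C n)) : Prop where
  d_d : ∀ n (x : C (n + 2)), d n (d (n + 1) x) = 0
  pair : IsSubcomplexPair d K L
  pair' : IsSubcomplexPair d K' L'
  inter_K : ∀ n, KI n = K n ⊓ K' n
  inter_L : ∀ n, LI n = L n ⊓ L' n
  union_K : ∀ n, KU n = K n ⊔ K' n
  union_L : ∀ n, LU n = L n ⊔ L' n

/-- The data from which the connecting map sends a relative cycle `z` of `(K ⊔ K', L ⊔ L')`
to the class of `d x - u`. -/
structure IsSplitting (d : ∀ n, C (n + 1) →+ C n) (K L K' L' : ∀ n, AddSubgroup (C n))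
    {n : ℕ} (z x : C (n + 1)) (u : C n) : Prop where
  mem_K : x ∈ K (n + 1)
  sub_mem_K' : z - x ∈ K' (n + 1)
  mem_L : u ∈ L n
  sub_mem_L' : d n z - u ∈ L' n

namespace IsSplitting

variable {n : ℕ} {z x : C (n + 1)} {u : C n}

theorem d_sub_mem_boundariesModulo_left (hs : IsSplitting d K L K' L' z x u) :
    d n x - u ∈ boundariesModulo d K L n := by
  rw [sub_eq_add_neg]
  exact d_add_mem_boundariesModulo hs.mem_K (neg_mem hs.mem_L)

theorem d_sub_mem_boundariesModulo_right (hs : IsSplitting d K L K' L' z x u) :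
    d n x - u ∈ boundariesModulo d K' L' n := by
  convert d_add_mem_boundariesModulo (neg_mem hs.sub_mem_K') hs.sub_mem_L' using 1
  rw [map_neg, map_sub]
  abel

end IsSplitting

namespace MayerVietorisData

noncomputable def mapInter (h : MayerVietorisData d K L K' L' KI LI KU LU) (n : ℕ) :
    relH d KI LI n →+ relH d K L n × relH d K' L' n :=
  (inducedRelMap d (fun n => (h.inter_K n).trans_le inf_le_left)
      (fun n => (h.inter_L n).trans_le inf_le_left) n).prod
    (inducedRelMap d (fun n => (h.inter_K n).trans_le inf_le_right)
      (fun n => (h.inter_L n).trans_le inf_le_right) n)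

noncomputable def mapUnion (h : MayerVietorisData d K L K' L' KI LI KU LU) (n : ℕ) :
    relH d K L n × relH d K' L' n →+ relH d KU LU n :=
  (inducedRelMap d (fun n => le_sup_left.trans_eq (h.union_K n).symm)
      (fun n => le_sup_left.trans_eq (h.union_L n).symm) n).comp (AddMonoidHom.fst _ _) -
    (inducedRelMap d (fun n => le_sup_right.trans_eq (h.union_K n).symm)
      (fun n => le_sup_right.trans_eq (h.union_L n).symm) n).comp (AddMonoidHom.snd _ _)

theorem mapInter_mk (h : MayerVietorisData d K L K' L' KI LI KU LU) {n : ℕ} {w : C n}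
    (hw : w ∈ relZ d KI LI n) (hw₁ : w ∈ relZ d K L n) (hw₂ : w ∈ relZ d K' L' n) :
    h.mapInter n (QuotientAddGroup.mk ⟨w, hw⟩) =
      (QuotientAddGroup.mk ⟨w, hw₁⟩, QuotientAddGroup.mk ⟨w, hw₂⟩) :=
  rfl

theorem sub_mem_relZ (h : MayerVietorisData d K L K' L' KI LI KU LU) {n : ℕ} {x y : C n}
    (hx : x ∈ relZ d K L n) (hy : y ∈ relZ d K' L' n) : x - y ∈ relZ d KU LU n :=
  sub_mem (relZ_mono d (fun n => le_sup_left.trans_eq (h.union_K n).symm)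
      (fun n => le_sup_left.trans_eq (h.union_L n).symm) n hx)
    (relZ_mono d (fun n => le_sup_right.trans_eq (h.union_K n).symm)
      (fun n => le_sup_right.trans_eq (h.union_L n).symm) n hy)

theorem mapUnion_mk (h : MayerVietorisData d K L K' L' KI LI KU LU) {n : ℕ} {x y z : C n}
    (hx : x ∈ relZ d K L n) (hy : y ∈ relZ d K' L' n) (hz : z ∈ relZ d KU LU n)
    (hxyz : x - y = z) :
    h.mapUnion n (QuotientAddGroup.mk ⟨x, hx⟩, QuotientAddGroup.mk ⟨y, hy⟩) =
      QuotientAddGroup.mk ⟨z, hz⟩ := by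
  subst hxyz
  rfl

theorem exists_isSplitting (h : MayerVietorisData d K L K' L' KI LI KU LU) {n : ℕ}
    {z : C (n + 1)} (hz : z ∈ relZ d KU LU (n + 1)) : ∃ x u, IsSplitting d K L K' L' z x u := by
  obtain ⟨hzK, hzL⟩ := mem_relZ_succ.mp hz
  rw [h.union_K] at hzK
  rw [h.union_L] at hzL
  obtain ⟨x, hx, y, hy, rfl⟩ := AddSubgroup.mem_sup.mp hzK
  obtain ⟨u, hu, v, hv, huv⟩ := AddSubgroup.mem_sup.mp hzL
  refine ⟨x, u, hx, by rwa [add_sub_cancel_left], hu, ?_⟩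
  rwa [← huv, add_sub_cancel_left]

theorem d_sub_mem_relZ (h : MayerVietorisData d K L K' L' KI LI KU LU) {n : ℕ}
    {z x : C (n + 1)} {u : C n} (hs : IsSplitting d K L K' L' z x u) :
    d n x - u ∈ relZ d KI LI n := by
  rw [relZ_inf h.inter_K h.inter_L]
  exact ⟨boundariesModulo_le_relZ h.d_d h.pair hs.d_sub_mem_boundariesModulo_left,
    boundariesModulo_le_relZ h.d_d h.pair' hs.d_sub_mem_boundariesModulo_right⟩

theorem sub_mem_boundariesModulo (h : MayerVietorisData d K L K' L' KI LI KU LU)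
    {n : ℕ} {z x x' : C (n + 1)} {u u' : C n} (hs : IsSplitting d K L K' L' z x u)
    (hs' : IsSplitting d K L K' L' z x' u') :
    (d n x - u) - (d n x' - u') ∈ boundariesModulo d KI LI n := by
  have hxx' : x - x' ∈ KI (n + 1) := by
    rw [h.inter_K]
    refine AddSubgroup.mem_inf.mpr ⟨sub_mem hs.mem_K hs'.mem_K, ?_⟩
    rw [← sub_sub_sub_cancel_left x' x z]
    exact sub_mem hs'.sub_mem_K' hs.sub_mem_K'
  have hu'u : u' - u ∈ LI n := by
    rw [h.inter_L]
    refine AddSubgroup.mem_inf.mpr ⟨sub_mem hs'.mem_L hs.mem_L, ?_⟩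
    rw [← sub_sub_sub_cancel_left u u' (d n z)]
    exact sub_mem hs.sub_mem_L' hs'.sub_mem_L'
  convert d_add_mem_boundariesModulo hxx' hu'u using 1
  rw [map_sub]
  abel

theorem exists_connecting_class (h : MayerVietorisData d K L K' L' KI LI KU LU) {n : ℕ}
    (z : relZ d KU LU (n + 1)) :
    ∃ c : relH d KI LI n, ∀ x u (hs : IsSplitting d K L K' L' z x u),
      c = QuotientAddGroup.mk ⟨d n x - u, h.d_sub_mem_relZ hs⟩ := by
  obtain ⟨x, u, hs⟩ := h.exists_isSplitting z.2
  exact ⟨QuotientAddGroup.mk ⟨d n x - u, h.d_sub_mem_relZ hs⟩, fun x' u' hs' =>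
    (relH_mk_eq_mk_iff _ _).mpr (h.sub_mem_boundariesModulo hs hs')⟩

noncomputable def connectingFun (h : MayerVietorisData d K L K' L' KI LI KU LU) (n : ℕ)
    (z : relZ d KU LU (n + 1)) : relH d KI LI n :=
  (h.exists_connecting_class z).choose

theorem connectingFun_eq (h : MayerVietorisData d K L K' L' KI LI KU LU) {n : ℕ}
    (z : relZ d KU LU (n + 1)) {x : C (n + 1)} {u : C n} (hs : IsSplitting d K L K' L' z x u) :
    h.connectingFun n z = QuotientAddGroup.mk ⟨d n x - u, h.d_sub_mem_relZ hs⟩ :=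
  (h.exists_connecting_class z).choose_spec x u hs

theorem connectingFun_add (h : MayerVietorisData d K L K' L' KI LI KU LU) (n : ℕ)
    (z z' : relZ d KU LU (n + 1)) :
    h.connectingFun n (z + z') = h.connectingFun n z + h.connectingFun n z' := by
  obtain ⟨x, u, hs⟩ := h.exists_isSplitting z.2
  obtain ⟨x', u', hs'⟩ := h.exists_isSplitting z'.2
  have hss' : IsSplitting d K L K' L' (z + z' : relZ d KU LU (n + 1)) (x + x') (u + u') := by
    refine ⟨add_mem hs.mem_K hs'.mem_K, ?_, add_mem hs.mem_L hs'.mem_L, ?_⟩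
    · convert add_mem hs.sub_mem_K' hs'.sub_mem_K' using 1
      push_cast
      abel
    · convert add_mem hs.sub_mem_L' hs'.sub_mem_L' using 1
      push_cast
      rw [map_add]
      abel
  rw [h.connectingFun_eq _ hs, h.connectingFun_eq _ hs', h.connectingFun_eq _ hss',
    ← QuotientAddGroup.mk_add]
  congr 1
  ext
  simp only [AddSubgroup.coe_add, map_add]
  abel

theorem connectingFun_eq_zero (h : MayerVietorisData d K L K' L' KI LI KU LU) {n : ℕ}
    (z : relZ d KU LU (n + 1)) {x : C (n + 1)} (hx : x ∈ relZ d K L (n + 1))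
    (hzx : (z : C (n + 1)) - x ∈ relZ d K' L' (n + 1)) : h.connectingFun n z = 0 := by
  have hs : IsSplitting d K L K' L' z x (d n x) := by
    refine ⟨hx.1, hzx.1, hx.2, ?_⟩
    rw [← map_sub]
    exact hzx.2
  rw [h.connectingFun_eq z hs, relH_mk_eq_zero_iff, sub_self]
  exact zero_mem _

noncomputable def connecting (h : MayerVietorisData d K L K' L' KI LI KU LU) (n : ℕ) :
    relH d KU LU (n + 1) →+ relH d KI LI n :=
  QuotientAddGroup.lift _ (AddMonoidHom.mk' (h.connectingFun n) (h.connectingFun_add n)) <| by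
    intro b hb
    have hbB : (b : C (n + 1)) ∈ boundariesModulo d KU LU (n + 1) :=
      (AddSubgroup.mem_inf.mp (AddSubgroup.mem_addSubgroupOf.mp hb)).1
    rw [boundariesModulo_sup h.union_K h.union_L] at hbB
    obtain ⟨β, hβ, β', hβ', hbe⟩ := AddSubgroup.mem_sup.mp hbB
    refine h.connectingFun_eq_zero b (boundariesModulo_le_relZ h.d_d h.pair hβ) ?_
    rw [← hbe, add_sub_cancel_left]
    exact boundariesModulo_le_relZ h.d_d h.pair' hβ'

theorem connecting_mk (h : MayerVietorisData d K L K' L' KI LI KU LU) {n : ℕ}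
    (z : relZ d KU LU (n + 1)) : h.connecting n (QuotientAddGroup.mk z) = h.connectingFun n z :=
  rfl

theorem exact_mapInter_mapUnion (h : MayerVietorisData d K L K' L' KI LI KU LU) (n : ℕ) :
    Function.Exact (h.mapInter n) (h.mapUnion n) := by
  refine Function.Exact.of_comp_of_mem_range (funext fun c => ?_) fun p hp => ?_
  · obtain ⟨⟨w, hw⟩, rfl⟩ := QuotientAddGroup.mk_surjective c
    obtain ⟨hw₁, hw₂⟩ := AddSubgroup.mem_inf.mp ((relZ_inf h.inter_K h.inter_L).le hw)
    rw [Function.comp_apply, h.mapInter_mk hw hw₁ hw₂,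
      h.mapUnion_mk hw₁ hw₂ (zero_mem _) (sub_self w)]
    rfl
  · obtain ⟨⟨⟨x, hx⟩, ⟨y, hy⟩⟩, rfl⟩ :=
      Prod.map_surjective.mpr ⟨QuotientAddGroup.mk_surjective, QuotientAddGroup.mk_surjective⟩ p
    rw [Prod.map_apply, h.mapUnion_mk hx hy (h.sub_mem_relZ hx hy) rfl, relH_mk_eq_zero_iff,
      boundariesModulo_sup h.union_K h.union_L] at hp
    obtain ⟨β, hβ, β', hβ', hxy⟩ := AddSubgroup.mem_sup.mp hp
    have hw₁ : x - β ∈ relZ d K L n := sub_mem hx (boundariesModulo_le_relZ h.d_d h.pair hβ)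
    have hxβ : x - β = y + β' := by linear_combination (norm := abel1) -hxy
    have hw₂ : x - β ∈ relZ d K' L' n := by
      rw [hxβ]
      exact add_mem hy (boundariesModulo_le_relZ h.d_d h.pair' hβ')
    have hw : x - β ∈ relZ d KI LI n := by
      rw [relZ_inf h.inter_K h.inter_L]
      exact AddSubgroup.mem_inf.mpr ⟨hw₁, hw₂⟩
    refine ⟨QuotientAddGroup.mk ⟨x - β, hw⟩, ?_⟩
    rw [h.mapInter_mk hw hw₁ hw₂, Prod.map_apply, Prod.ext_iff, relH_mk_eq_mk_iff,
      relH_mk_eq_mk_iff, sub_sub_cancel_left]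
    constructor
    · exact neg_mem hβ
    · rwa [hxβ, add_sub_cancel_left]

theorem exact_mapUnion_connecting (h : MayerVietorisData d K L K' L' KI LI KU LU) (n : ℕ) :
    Function.Exact (h.mapUnion (n + 1)) (h.connecting n) := by
  refine Function.Exact.of_comp_of_mem_range (funext fun p => ?_) fun c hc => ?_
  · obtain ⟨⟨⟨x, hx⟩, ⟨y, hy⟩⟩, rfl⟩ :=
      Prod.map_surjective.mpr ⟨QuotientAddGroup.mk_surjective, QuotientAddGroup.mk_surjective⟩ p
    rw [Function.comp_apply, Prod.map_apply, h.mapUnion_mk hx hy (h.sub_mem_relZ hx hy) rfl,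
      connecting_mk]
    refine h.connectingFun_eq_zero _ hx ?_
    rw [sub_sub_cancel_left]
    exact neg_mem hy
  · obtain ⟨⟨z, hz⟩, rfl⟩ := QuotientAddGroup.mk_surjective c
    obtain ⟨x, u, hs⟩ := h.exists_isSplitting hz
    rw [connecting_mk, h.connectingFun_eq _ hs, relH_mk_eq_zero_iff, mem_boundariesModulo] at hc
    obtain ⟨ξ, hξ, l, hl, hxu⟩ := hc
    rw [h.inter_K] at hξ
    rw [h.inter_L] at hl
    have ha : x - ξ ∈ relZ d K L (n + 1) := by
      refine mem_relZ_succ.mpr ⟨sub_mem hs.mem_K hξ.1, ?_⟩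
      rw [show d n (x - ξ) = u + l by rw [map_sub]; linear_combination (norm := abel1) -hxu]
      exact add_mem hs.mem_L hl.1
    have hb : x - ξ - z ∈ relZ d K' L' (n + 1) := by
      refine mem_relZ_succ.mpr ⟨?_, ?_⟩
      · rw [show x - ξ - z = -(z - x) - ξ by abel]
        exact sub_mem (neg_mem hs.sub_mem_K') hξ.2
      · rw [show d n (x - ξ - z) = l - (d n z - u) by
          rw [map_sub, map_sub]; linear_combination (norm := abel1) -hxu]
        exact sub_mem hl.2 hs.sub_mem_L'
    exact ⟨(QuotientAddGroup.mk ⟨x - ξ, ha⟩, QuotientAddGroup.mk ⟨x - ξ - z, hb⟩),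
      h.mapUnion_mk ha hb hz (sub_sub_cancel _ _)⟩

theorem exact_connecting_mapInter (h : MayerVietorisData d K L K' L' KI LI KU LU) (n : ℕ) :
    Function.Exact (h.connecting n) (h.mapInter n) := by
  refine Function.Exact.of_comp_of_mem_range (funext fun c => ?_) fun c hc => ?_
  · obtain ⟨⟨z, hz⟩, rfl⟩ := QuotientAddGroup.mk_surjective c
    obtain ⟨x, u, hs⟩ := h.exists_isSplitting hz
    have hw := h.d_sub_mem_relZ hs
    obtain ⟨hw₁, hw₂⟩ := AddSubgroup.mem_inf.mp ((relZ_inf h.inter_K h.inter_L).le hw)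
    rw [Function.comp_apply, connecting_mk, h.connectingFun_eq _ hs, h.mapInter_mk hw hw₁ hw₂,
      Pi.zero_apply, Prod.zero_eq_mk, Prod.ext_iff, relH_mk_eq_zero_iff, relH_mk_eq_zero_iff]
    exact ⟨hs.d_sub_mem_boundariesModulo_left, hs.d_sub_mem_boundariesModulo_right⟩
  · obtain ⟨⟨w, hw⟩, rfl⟩ := QuotientAddGroup.mk_surjective c
    obtain ⟨hw₁, hw₂⟩ := AddSubgroup.mem_inf.mp ((relZ_inf h.inter_K h.inter_L).le hw)
    rw [h.mapInter_mk hw hw₁ hw₂, Prod.zero_eq_mk, Prod.ext_iff, relH_mk_eq_zero_iff,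
      relH_mk_eq_zero_iff, mem_boundariesModulo, mem_boundariesModulo] at hc
    obtain ⟨⟨ξ, hξ, l, hl, hw₁⟩, ⟨ξ', hξ', l', hl', hw₂⟩⟩ := hc
    have hs : IsSplitting d K L K' L' (ξ - ξ') ξ (-l) :=
      ⟨hξ, by rwa [sub_sub_cancel_left, neg_mem_iff], neg_mem hl, by
        rw [sub_neg_eq_add, map_sub]
        convert hl' using 1
        linear_combination (norm := abel1) hw₁ - hw₂⟩
    have hz : ξ - ξ' ∈ relZ d KU LU (n + 1) := by
      refine mem_relZ_succ.mpr ⟨?_, ?_⟩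
      · rw [h.union_K]
        exact sub_mem (AddSubgroup.mem_sup_left hξ) (AddSubgroup.mem_sup_right hξ')
      · rw [h.union_L, show d n (ξ - ξ') = l' - l by
          rw [map_sub]; linear_combination (norm := abel1) hw₁ - hw₂]
        exact sub_mem (AddSubgroup.mem_sup_right hl') (AddSubgroup.mem_sup_left hl)
    refine ⟨QuotientAddGroup.mk ⟨ξ - ξ', hz⟩, ?_⟩
    rw [connecting_mk, h.connectingFun_eq ⟨ξ - ξ', hz⟩ hs]
    congr 2
    rw [sub_neg_eq_add, hw₁]

theorem surjective_mapUnion_zero (h : MayerVietorisData d K L K' L' KI LI KU LU) :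
    Function.Surjective (h.mapUnion 0) := by
  intro c
  obtain ⟨⟨z, hz⟩, rfl⟩ := QuotientAddGroup.mk_surjective c
  have hz' : z ∈ K 0 ⊔ K' 0 := h.union_K 0 ▸ hz
  obtain ⟨x, hx, y, hy, rfl⟩ := AddSubgroup.mem_sup.mp hz'
  exact ⟨(QuotientAddGroup.mk ⟨x, hx⟩, QuotientAddGroup.mk ⟨-y, neg_mem hy⟩),
    h.mapUnion_mk _ _ hz (sub_neg_eq_add x y)⟩

end MayerVietorisData

end RelativeHomology

section Hypergraph

def InterClosed {V : Type} [DecidableEq V] (H H' : Set (Finset V)) : Prop :=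
  ∀ σ ∈ H, ∀ σ' ∈ H', σ ∩ σ' = ∅ ∨ σ ∩ σ' ∈ H ∩ H'

namespace InterClosed

variable {V : Type} [DecidableEq V] {H H' : Set (Finset V)}

theorem symm (hHH' : InterClosed H H') : InterClosed H' H := by
  intro σ' hσ' σ hσ
  rw [Finset.inter_comm, Set.inter_comm]
  exact hHH' σ hσ σ' hσ'

theorem mem_of_subset (hHH' : InterClosed H H') {σ τ : Finset V} (hσ : σ ∈ H)
    (hτ : τ ∈ H') (hτσ : τ ⊆ σ) (hτ₀ : τ.Nonempty) : τ ∈ H := by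
  rcases hHH' σ hσ τ hτ with h | h <;> rw [Finset.inter_eq_right.mpr hτσ] at h
  · exact absurd h hτ₀.ne_empty
  · exact h.1

theorem mem_of_codim_one (hHH' : InterClosed H H') {σ σ' τ : Finset V}
    (hσ : σ ∈ H) (hσ' : σ' ∈ H') (hσ'H : σ' ∉ H) (hτσ : τ ⊆ σ) (hτσ' : τ ⊆ σ')
    (hτ₀ : τ.Nonempty) (hστ : σ.card = τ.card + 1) (hσσ' : σ'.card = σ.card) : τ ∈ H := by
  have hτ : τ ⊆ σ ∩ σ' := Finset.subset_inter hτσ hτσ'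
  have hI : σ ∩ σ' ∈ H ∩ H' :=
    (hHH' σ hσ σ' hσ').resolve_left fun h => (hτ₀.mono hτ).ne_empty h
  have hIσ : σ ∩ σ' ≠ σ := fun h => by
    rw [Finset.inter_eq_left] at h
    exact hσ'H (Finset.eq_of_subset_of_card_le h hσσ'.le ▸ hσ)
  have hcard : (σ ∩ σ').card < σ.card :=
    Finset.card_lt_card (Finset.ssubset_iff_subset_ne.mpr ⟨Finset.inter_subset_left, hIσ⟩)
  rw [Finset.eq_of_subset_of_card_le hτ (by omega)]
  exact hI.1

end InterClosed

variable {V : Type} [LinearOrder V] {G : Type} [AddCommGroup G] {H H' : Set (Finset V)}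

theorem mem_chainsOn {K : Set (Finset V)} {n : ℕ} {c : Ch V G n} :
    c ∈ chainsOn V G K n ↔ ∀ σ ∈ c.support, (σ : Simp V n).1 ∈ K :=
  Iff.rfl

variable (G) in
theorem chainsOn_inter (K K' : Set (Finset V)) (n : ℕ) :
    chainsOn V G (K ∩ K') n = chainsOn V G K n ⊓ chainsOn V G K' n := by
  ext c
  simp only [AddSubgroup.mem_inf, mem_chainsOn, Set.mem_inter_iff]
  exact forall₂_and

theorem exists_split_chainsOn_union {K K' : Set (Finset V)} {n : ℕ} {c : Ch V G n}
    (hc : c ∈ chainsOn V G (K ∪ K') n) :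
    ∃ a ∈ chainsOn V G K n, ∃ b ∈ chainsOn V G (K' \ K) n, a + b = c := by
  classical
  refine ⟨c.filter (fun σ => σ.1 ∈ K), fun σ hσ => ?_, c.filter (fun σ => σ.1 ∉ K),
    fun σ hσ => ?_, Finsupp.filter_add_filter_not c _⟩
  · exact (Finset.mem_filter.mp hσ).2
  · obtain ⟨hσc, hσK⟩ := Finset.mem_filter.mp hσ
    exact ⟨(hc σ hσc).resolve_left hσK, hσK⟩

variable (G) in
theorem chainsOn_union (K K' : Set (Finset V)) (n : ℕ) :
    chainsOn V G (K ∪ K') n = chainsOn V G K n ⊔ chainsOn V G K' n := by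
  refine le_antisymm (fun c hc => ?_) (sup_le (chainsOn_mono V G Set.subset_union_left n)
    (chainsOn_mono V G Set.subset_union_right n))
  obtain ⟨a, ha, b, hb, rfl⟩ := exists_split_chainsOn_union hc
  exact AddSubgroup.add_mem_sup ha (chainsOn_mono V G Set.sdiff_subset n hb)

variable (G) in
theorem InfC_chainsOn_inter (K K' : Set (Finset V)) (n : ℕ) :
    InfC (bdry V G) (fun m => chainsOn V G (K ∩ K') m) n =
      InfC (bdry V G) (fun m => chainsOn V G K m) n ⊓
        InfC (bdry V G) (fun m => chainsOn V G K' m) n := by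
  simp only [chainsOn_inter]
  exact InfC_inf _ _ n

theorem exists_mem_support_of_mem_support_bdry {n : ℕ} {c : Ch V G (n + 1)} {τ : Simp V n}
    (hτ : τ ∈ (bdry V G n c).support) : ∃ σ ∈ c.support, τ.1 ⊆ σ.1 := by
  classical
  rw [bdry, Finsupp.liftAddHom_apply] at hτ
  obtain ⟨σ, hσ, hτσ⟩ := Finset.mem_biUnion.mp (Finsupp.support_sum hτ)
  obtain ⟨v, -, hτv⟩ := Finset.mem_biUnion.mp (Finsupp.support_finsetSum hτσ)
  rw [Finset.mem_singleton.mp (Finsupp.support_single_subset hτv)]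
  exact ⟨σ, hσ, Finset.erase_subset _ _⟩

theorem bdry_mem_chainsOn_of_add (hHH' : InterClosed H H') {n : ℕ} {a b : Ch V G (n + 1)}
    (ha : a ∈ chainsOn V G H (n + 1)) (hb : b ∈ chainsOn V G (H' \ H) (n + 1))
    (hab : bdry V G n (a + b) ∈ chainsOn V G (H ∪ H') n) :
    bdry V G n a ∈ chainsOn V G H n ∧ bdry V G n b ∈ chainsOn V G H' n := by
  have hτ₀ : ∀ τ : Simp V n, τ.1.Nonempty := fun τ => Finset.card_pos.mp (by rw [τ.2]; omega)
  have hsupp : ∀ τ : Simp V n, τ.1 ∉ H → τ.1 ∉ H' →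
      (τ ∈ (bdry V G n a).support ↔ τ ∈ (bdry V G n b).support) := by
    intro τ hτH hτH'
    have h0 : bdry V G n a τ + bdry V G n b τ = 0 := by
      rw [← Finsupp.add_apply, ← map_add]
      exact Finsupp.notMem_support_iff.mp fun h => (hab τ h).elim hτH hτH'
    rw [Finsupp.mem_support_iff, Finsupp.mem_support_iff, eq_neg_of_add_eq_zero_right h0,
      neg_ne_zero]
  have hda : bdry V G n a ∈ chainsOn V G H n := by
    intro τ hτ
    by_contra hτH
    obtain ⟨σ, hσ, hτσ⟩ := exists_mem_support_of_mem_support_bdry hτ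
    have hτH' : τ.1 ∉ H' := fun h => hτH (hHH'.mem_of_subset (ha σ hσ) h hτσ (hτ₀ τ))
    obtain ⟨σ', hσ', hτσ'⟩ :=
      exists_mem_support_of_mem_support_bdry ((hsupp τ hτH hτH').mp hτ)
    exact hτH (hHH'.mem_of_codim_one (ha σ hσ) (hb σ' hσ').1 (hb σ' hσ').2 hτσ hτσ' (hτ₀ τ)
      (by rw [σ.2, τ.2]) (by rw [σ'.2, σ.2]))
  refine ⟨hda, fun τ hτ => ?_⟩
  by_contra hτH'
  obtain ⟨σ', hσ', hτσ'⟩ := exists_mem_support_of_mem_support_bdry hτ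
  have hτH : τ.1 ∉ H := fun h => hτH' (hHH'.symm.mem_of_subset (hb σ' hσ').1 h hτσ' (hτ₀ τ))
  exact hτH (hda τ ((hsupp τ hτH hτH').mpr hτ))

variable (G) in
theorem InfC_chainsOn_union (hHH' : InterClosed H H') (n : ℕ) :
    InfC (bdry V G) (fun m => chainsOn V G (H ∪ H') m) n =
      InfC (bdry V G) (fun m => chainsOn V G H m) n ⊔
        InfC (bdry V G) (fun m => chainsOn V G H' m) n := by
  refine le_antisymm ?_ (sup_le
    (InfC_mono _ (fun m => chainsOn_mono V G Set.subset_union_left m) n)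
    (InfC_mono _ (fun m => chainsOn_mono V G Set.subset_union_right m) n))
  cases n with
  | zero => exact (chainsOn_union G H H' 0).le
  | succ n =>
    intro c hc
    obtain ⟨hcK, hcL⟩ := AddSubgroup.mem_inf.mp hc
    obtain ⟨a, ha, b, hb, rfl⟩ := exists_split_chainsOn_union hcK
    obtain ⟨hda, hdb⟩ := bdry_mem_chainsOn_of_add hHH' ha hb hcL
    exact AddSubgroup.add_mem_sup (AddSubgroup.mem_inf.mpr ⟨ha, hda⟩)
      (AddSubgroup.mem_inf.mpr ⟨chainsOn_mono V G Set.sdiff_subset _ hb, hdb⟩)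

end Hypergraph

theorem relative_mayer_vietoris_general
    (V : Type) [LinearOrder V] (G : Type) [AddCommGroup G]
    (H H' A A' : Set (Finset V))
    (hA : A ⊆ H) (hA' : A' ⊆ H')
    (hHH' : ∀ σ ∈ H, ∀ σ' ∈ H', σ ∩ σ' = ∅ ∨ σ ∩ σ' ∈ H ∩ H')
    (hAA' : ∀ τ ∈ A, ∀ τ' ∈ A', τ ∩ τ' = ∅ ∨ τ ∩ τ' ∈ A ∩ A') :
    ∃ conn : ∀ n,
        relH (bdry V G) (InfC (bdry V G) fun m => chainsOn V G (H ∪ H') m)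
            (InfC (bdry V G) fun m => chainsOn V G (A ∪ A') m) (n + 1) →+
          relH (bdry V G) (InfC (bdry V G) fun m => chainsOn V G (H ∩ H') m)
            (InfC (bdry V G) fun m => chainsOn V G (A ∩ A') m) n,
      (∀ n, Function.Exact (mvFst V G H H' A A' n) (mvSnd V G H H' A A' n)) ∧
      (∀ n, Function.Exact (mvSnd V G H H' A A' (n + 1)) (conn n)) ∧
      (∀ n, Function.Exact (conn n) (mvFst V G H H' A A' n)) ∧
      Function.Surjective (mvSnd V G H H' A A' 0) := by
  have h : MayerVietorisData (bdry V G)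
      (InfC (bdry V G) fun m => chainsOn V G H m) (InfC (bdry V G) fun m => chainsOn V G A m)
      (InfC (bdry V G) fun m => chainsOn V G H' m) (InfC (bdry V G) fun m => chainsOn V G A' m)
      (InfC (bdry V G) fun m => chainsOn V G (H ∩ H') m)
      (InfC (bdry V G) fun m => chainsOn V G (A ∩ A') m)
      (InfC (bdry V G) fun m => chainsOn V G (H ∪ H') m)
      (InfC (bdry V G) fun m => chainsOn V G (A ∪ A') m) :=
    { d_d := bdry_bdry
      pair := isSubcomplexPair_InfC bdry_bdry (chainsOn_mono V G hA)
      pair' := isSubcomplexPair_InfC bdry_bdry (chainsOn_mono V G hA')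
      inter_K := InfC_chainsOn_inter G H H'
      inter_L := InfC_chainsOn_inter G A A'
      union_K := InfC_chainsOn_union G hHH'
      union_L := InfC_chainsOn_union G hAA' }
  exact ⟨h.connecting, h.exact_mapInter_mapUnion, h.exact_mapUnion_connecting,
    h.exact_connecting_mapInter, h.surjective_mapUnion_zero⟩

/-- **relative Mayer–Vietoris.**  Let `(H, A)` and `(H', A')` be hypergraph
pairs such that the intersection of a hyperedge of `H` with one of `H'` is empty or lies
in `H ∩ H'`, and likewise for `A`, `A'`.  Then there is a long exact sequence
`⋯ → H_n(H ∩ H', A ∩ A') → H_n(H,A) ⊕ H_n(H',A') → H_n(H ∪ H', A ∪ A') → ⋯`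
of relative embedded homology, where the first two maps are the canonical ones and the
third is a connecting homomorphism. -/
theorem relative_mayer_vietoris
    (V : Type) [LinearOrder V] [Fintype V] (G : Type) [AddCommGroup G]
    (H H' A A' : Set (Finset V))
    (hH : ∀ σ ∈ H ∪ H', Finset.Nonempty σ)
    (hA : A ⊆ H) (hA' : A' ⊆ H')
    (hHH' : ∀ σ ∈ H, ∀ σ' ∈ H', σ ∩ σ' = ∅ ∨ σ ∩ σ' ∈ H ∩ H')
    (hAA' : ∀ τ ∈ A, ∀ τ' ∈ A', τ ∩ τ' = ∅ ∨ τ ∩ τ' ∈ A ∩ A') :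
    ∃ conn : ∀ n,
        relH (bdry V G) (InfC (bdry V G) fun m => chainsOn V G (H ∪ H') m)
            (InfC (bdry V G) fun m => chainsOn V G (A ∪ A') m) (n + 1) →+
          relH (bdry V G) (InfC (bdry V G) fun m => chainsOn V G (H ∩ H') m)
            (InfC (bdry V G) fun m => chainsOn V G (A ∩ A') m) n,
      (∀ n, Function.Exact (mvFst V G H H' A A' n) (mvSnd V G H H' A A' n)) ∧
      (∀ n, Function.Exact (mvSnd V G H H' A A' (n + 1)) (conn n)) ∧
      (∀ n, Function.Exact (conn n) (mvFst V G H H' A A' n)) ∧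
      Function.Surjective (mvSnd V G H H' A A' 0) :=
  relative_mayer_vietoris_general V G H H' A A' hA hA' hHH' hAA'
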